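/- For φ = A_{α,β}(1,·) with α ∈ ℝ, β > 0, one has (1/4)∫_ℝ ((∂_x φ)² - 4x²) dx = (4/3)β^{3/2}. In particular the value is independent of α. -/

import Mathlib

open MeasureTheory

/-- The limit shape `A_{α,β}(1,·)` of the parabolic Airy process conditioned to
be `β - α²` at the point `α`. -/
noncomputable def Afun (α β : ℝ) (x : ℝ) : ℝ :=
  if x < α - Real.sqrt β then -x ^ 2
  else if x ≤ α then -2 * (α - Real.sqrt β) * x + (α - Real.sqrt β) ^ 2
  else if x ≤ α + Real.sqrt β then -2 * (α + Real.sqrt β) * x + (α + Real.sqrt β) ^ 2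
  else -x ^ 2

noncomputable def Adfun (α β : ℝ) (x : ℝ) : ℝ :=
  if x < α - Real.sqrt β then -2 * x
  else if x < α then -2 * (α - Real.sqrt β)
  else if x < α + Real.sqrt β then -2 * (α + Real.sqrt β)
  else -2 * x

lemma Afun_eq (α β : ℝ) (hβ : 0 < β) (x : ℝ) :
    Afun α β x = -x ^ 2 +
      (min (max (x - (α - Real.sqrt β)) 0) (max ((α + Real.sqrt β) - x) 0)) ^ 2 := by
  have hs : 0 < Real.sqrt β := Real.sqrt_pos.mpr hβ
  set s := Real.sqrt β with hsdef
  unfold Afun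
  rcases lt_or_ge x (α - s) with h1 | h1
  · rw [if_pos h1, max_eq_right (by linarith : x - (α - s) ≤ 0),
      min_eq_left (le_max_right _ _)]
    ring
  · rw [if_neg (not_lt.mpr h1)]
    rcases le_or_gt x α with h2 | h2
    · rw [if_pos h2, max_eq_left (by linarith : (0:ℝ) ≤ x - (α - s)),
        max_eq_left (by linarith : (0:ℝ) ≤ α + s - x),
        min_eq_left (by linarith : x - (α - s) ≤ α + s - x)]
      ring
    · rw [if_neg (not_le.mpr h2)]
      rcases le_or_gt x (α + s) with h3 | h3
      · rw [if_pos h3, max_eq_left (by linarith : (0:ℝ) ≤ x - (α - s)),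
          max_eq_left (by linarith : (0:ℝ) ≤ α + s - x),
          min_eq_right (by linarith : α + s - x ≤ x - (α - s))]
        ring
      · rw [if_neg (not_le.mpr h3), max_eq_right (by linarith : α + s - x ≤ 0),
          min_eq_right (le_max_right _ _)]
        ring

lemma Afun_continuous (α β : ℝ) (hβ : 0 < β) : Continuous (Afun α β) := by
  have h : Afun α β = fun x => -x ^ 2 +
      (min (max (x - (α - Real.sqrt β)) 0) (max ((α + Real.sqrt β) - x) 0)) ^ 2 :=
    funext (Afun_eq α β hβ)
  rw [h]
  fun_prop


lemma neg_sq_hasDerivAt (x : ℝ) : HasDerivAt (fun y : ℝ => -y ^ 2) (-2 * x) x := by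
  have := (hasDerivAt_pow 2 x).neg
  refine this.congr_deriv ?_
  push_cast
  ring

lemma line_hasDerivAt (c d x : ℝ) :
    HasDerivAt (fun y : ℝ => -2 * c * y + d) (-2 * c) x := by
  have := ((hasDerivAt_id x).const_mul (-2 * c)).add_const d
  refine this.congr_deriv ?_
  simp

lemma Afun_hasDerivWithinAt (α β : ℝ) (hβ : 0 < β) (x : ℝ) :
    HasDerivWithinAt (Afun α β) (Adfun α β x) (Set.Ioi x) x := by
  have hs : 0 < Real.sqrt β := Real.sqrt_pos.mpr hβ
  rcases lt_or_ge x ((α - Real.sqrt β)) with h1 | h1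
  · -- x < (α - Real.sqrt β)
    rw [show Adfun α β x = -2 * x from by simp only [Adfun]; rw [if_pos h1]]
    refine (neg_sq_hasDerivAt x).hasDerivWithinAt.congr_of_eventuallyEq ?_ ?_
    · filter_upwards [mem_nhdsWithin_of_mem_nhds (Iio_mem_nhds h1)] with y hy
      simp only [Afun]; rw [if_pos (Set.mem_Iio.mp hy)]
    · simp only [Afun]; rw [if_pos h1]
  · rcases lt_or_ge x α with h2 | h2
    · -- (α - Real.sqrt β) ≤ x < α
      rw [show Adfun α β x = -2 * ((α - Real.sqrt β)) from by
        simp only [Adfun]; rw [if_neg (not_lt.mpr h1), if_pos h2]]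
      refine (line_hasDerivAt ((α - Real.sqrt β)) (((α - Real.sqrt β)) ^ 2) x).hasDerivWithinAt.congr_of_eventuallyEq
        ?_ ?_
      · filter_upwards [mem_nhdsWithin_of_mem_nhds (Iio_mem_nhds h2),
          self_mem_nhdsWithin] with y hy1 hy2
        have : ¬ y < (α - Real.sqrt β) := not_lt.mpr (le_trans h1 (le_of_lt (Set.mem_Ioi.mp hy2)))
        simp only [Afun]; rw [if_neg this, if_pos (le_of_lt (Set.mem_Iio.mp hy1))]
      · simp only [Afun]; rw [if_neg (not_lt.mpr h1), if_pos (le_of_lt h2)]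
    · rcases lt_or_ge x ((α + Real.sqrt β)) with h3 | h3
      · -- α ≤ x < (α + Real.sqrt β)
        rw [show Adfun α β x = -2 * ((α + Real.sqrt β)) from by
          simp only [Adfun]; rw [if_neg (not_lt.mpr h1), if_neg (not_lt.mpr h2), if_pos h3]]
        refine (line_hasDerivAt ((α + Real.sqrt β)) (((α + Real.sqrt β)) ^ 2) x).hasDerivWithinAt.congr_of_eventuallyEq
          ?_ ?_
        · filter_upwards [mem_nhdsWithin_of_mem_nhds (Iio_mem_nhds h3),
            self_mem_nhdsWithin] with y hy1 hy2
          have hya : ¬ y < (α - Real.sqrt β) := not_lt.mpr (by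
            have : x < y := Set.mem_Ioi.mp hy2
            linarith)
          have hyα : ¬ y ≤ α := not_le.mpr (by have : x < y := Set.mem_Ioi.mp hy2; linarith)
          simp only [Afun]; rw [if_neg hya, if_neg hyα, if_pos (le_of_lt (Set.mem_Iio.mp hy1))]
        · simp only [Afun]; rw [if_neg (not_lt.mpr h1)]
          rcases eq_or_lt_of_le h2 with h2e | h2l
          · rw [if_pos (le_of_eq h2e.symm), ← h2e]; ring
          · rw [if_neg (not_le.mpr h2l), if_pos (le_of_lt h3)]
      · -- (α + Real.sqrt β) ≤ x
        rw [show Adfun α β x = -2 * x from by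
          simp only [Adfun]; rw [if_neg (not_lt.mpr h1), if_neg (not_lt.mpr h2),
            if_neg (not_lt.mpr h3)]]
        refine (neg_sq_hasDerivAt x).hasDerivWithinAt.congr_of_eventuallyEq ?_ ?_
        · filter_upwards [self_mem_nhdsWithin] with y hy2
          have hxy : x < y := Set.mem_Ioi.mp hy2
          have hya : ¬ y < (α - Real.sqrt β) := not_lt.mpr (by linarith)
          have hyα : ¬ y ≤ α := not_le.mpr (by linarith)
          have hyb : ¬ y ≤ (α + Real.sqrt β) := not_le.mpr (by linarith)
          simp only [Afun]; rw [if_neg hya, if_neg hyα, if_neg hyb]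
        · simp only [Afun]; rw [if_neg (not_lt.mpr h1),
            if_neg (not_le.mpr (by linarith : α < x))]
          rcases eq_or_lt_of_le h3 with h3e | h3l
          · rw [if_pos (le_of_eq h3e.symm), ← h3e]; ring
          · rw [if_neg (not_le.mpr h3l)]

lemma Adfun_measurable (α β : ℝ) : Measurable (Adfun α β) := by
  unfold Adfun
  apply Measurable.ite (measurableSet_lt measurable_id measurable_const)
  · exact measurable_id.const_mul (-2)
  apply Measurable.ite (measurableSet_lt measurable_id measurable_const) measurable_const
  apply Measurable.ite (measurableSet_lt measurable_id measurable_const) measurable_const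
  exact measurable_id.const_mul (-2)

lemma Adfun_abs_le (α β x c : ℝ) (hx : |x| ≤ c) :
    |Adfun α β x| ≤ 2 * c + 2 * |α| + 2 * |Real.sqrt β| := by
  have h2 : |(-2 : ℝ)| = 2 := by norm_num
  have ha : |α - Real.sqrt β| ≤ |α| + |Real.sqrt β| := abs_sub α (Real.sqrt β)
  have hb : |α + Real.sqrt β| ≤ |α| + |Real.sqrt β| := abs_add_le α (Real.sqrt β)
  have hc : 0 ≤ c := le_trans (abs_nonneg x) hx
  unfold Adfun
  split_ifs <;> rw [abs_mul, h2] <;>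
    linarith [abs_nonneg α, abs_nonneg (Real.sqrt β), abs_nonneg x, ha, hb, hx]

lemma Adfun_intervalIntegrable (α β p q : ℝ) :
    IntervalIntegrable (Adfun α β) volume p q := by
  rw [intervalIntegrable_iff]
  apply Measure.integrableOn_of_bounded
    (M := 2 * (|p| + |q|) + 2 * |α| + 2 * |Real.sqrt β|)
  · exact (measure_Ioc_lt_top).ne
  · exact (Adfun_measurable α β).aestronglyMeasurable
  · filter_upwards [ae_restrict_mem measurableSet_uIoc] with x hx
    rw [Set.mem_uIoc] at hx
    have hxpq : |x| ≤ |p| + |q| := by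
      rcases hx with ⟨h1, h2⟩ | ⟨h1, h2⟩ <;>
        rw [abs_le] <;> constructor <;>
        nlinarith [le_abs_self p, le_abs_self q, neg_abs_le p, neg_abs_le q]
    rw [Real.norm_eq_abs]
    exact Adfun_abs_le α β x _ hxpq

lemma poly_integral (c p q : ℝ) :
    ∫ x in p..q, (4 * c ^ 2 - 4 * x ^ 2) =
      (4 * c ^ 2 * q - 4 / 3 * q ^ 3) - (4 * c ^ 2 * p - 4 / 3 * p ^ 3) := by
  apply intervalIntegral.integral_eq_sub_of_hasDerivAt
  · intro y _
    have h1 := (hasDerivAt_id y).const_mul (4 * c ^ 2)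
    have h2 := (hasDerivAt_pow 3 y).const_mul ((4:ℝ) / 3)
    refine (h1.sub h2).congr_deriv ?_
    push_cast
    ring
  · exact (by fun_prop : Continuous fun x : ℝ => 4 * c ^ 2 - 4 * x ^ 2).intervalIntegrable _ _

lemma g_measurable (α β : ℝ) :
    Measurable (fun x : ℝ => (Adfun α β x) ^ 2 - 4 * x ^ 2) :=
  ((Adfun_measurable α β).pow_const 2).sub ((measurable_id.pow_const 2).const_mul 4)

lemma g_indicator (α β : ℝ) (hβ : 0 < β) :
    (fun x : ℝ => (Adfun α β x) ^ 2 - 4 * x ^ 2) =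
      Set.indicator (Set.Icc (α - Real.sqrt β) (α + Real.sqrt β))
        (fun x : ℝ => (Adfun α β x) ^ 2 - 4 * x ^ 2) := by
  have hs : 0 < Real.sqrt β := Real.sqrt_pos.mpr hβ
  funext x
  by_cases hx : x ∈ Set.Icc (α - Real.sqrt β) (α + Real.sqrt β)
  · rw [Set.indicator_of_mem hx]
  · rw [Set.indicator_of_notMem hx]
    rcases lt_or_ge x (α - Real.sqrt β) with h | h
    · simp only [Adfun]; rw [if_pos h]; ring
    · have hb : α + Real.sqrt β < x := by
        by_contra hcon
        exact hx ⟨h, not_lt.mp hcon⟩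
      simp only [Adfun]
      rw [if_neg (not_lt.mpr h), if_neg (not_lt.mpr (by linarith)),
        if_neg (not_lt.mpr (le_of_lt hb))]
      ring

lemma g_integrable (α β : ℝ) (hβ : 0 < β) :
    Integrable (fun x : ℝ => (Adfun α β x) ^ 2 - 4 * x ^ 2) := by
  rw [g_indicator α β hβ]
  rw [integrable_indicator_iff measurableSet_Icc]
  set a := α - Real.sqrt β
  set b := α + Real.sqrt β
  refine Measure.integrableOn_of_bounded (μ := volume)
    (M := (2 * (|a| + |b|) + 2 * |α| + 2 * |Real.sqrt β|) ^ 2 + 4 * (|a| + |b|) ^ 2)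
    ?_ ?_ ?_
  · exact (measure_Icc_lt_top).ne
  · exact (g_measurable α β).aestronglyMeasurable
  · filter_upwards [ae_restrict_mem measurableSet_Icc] with x hx
    obtain ⟨hx1, hx2⟩ := hx
    have hxab : |x| ≤ |a| + |b| := by
      rw [abs_le]
      constructor <;> nlinarith [le_abs_self b, neg_abs_le a, abs_nonneg a, abs_nonneg b]
    have hAd := Adfun_abs_le α β x _ hxab
    rw [Real.norm_eq_abs, abs_le]
    constructor <;>
      nlinarith [sq_abs (Adfun α β x), sq_abs x, abs_nonneg (Adfun α β x), abs_nonneg x,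
        abs_nonneg a, abs_nonneg b, abs_nonneg α, abs_nonneg (Real.sqrt β)]

lemma ae_ne_real (α : ℝ) : ∀ᵐ x : ℝ, x ≠ α := by
  rw [ae_iff]
  have : {x : ℝ | ¬ x ≠ α} = {α} := by
    ext y; simp
  rw [this]
  exact Real.volume_singleton

lemma g_integral (α β : ℝ) (hβ : 0 < β) :
    (1 / 4) * ∫ x : ℝ, ((Adfun α β x) ^ 2 - 4 * x ^ 2) = (4 / 3) * β ^ ((3 : ℝ) / 2) := by
  have hs : 0 < Real.sqrt β := Real.sqrt_pos.mpr hβ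
  have haα : α - Real.sqrt β ≤ α := by linarith
  have hαb : α ≤ α + Real.sqrt β := by linarith
  have hab : α - Real.sqrt β ≤ α + Real.sqrt β := by linarith
  have hint := g_integrable α β hβ
  have h1 : ∫ x : ℝ, ((Adfun α β x) ^ 2 - 4 * x ^ 2) =
      ∫ x in (α - Real.sqrt β)..(α + Real.sqrt β), ((Adfun α β x) ^ 2 - 4 * x ^ 2) := by
    rw [g_indicator α β hβ, integral_indicator measurableSet_Icc,
      integral_Icc_eq_integral_Ioc, ← intervalIntegral.integral_of_le hab]
    exact intervalIntegral.integral_congr fun x _ => by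
      rw [← g_indicator α β hβ]
  have h2 : ∫ x in (α - Real.sqrt β)..(α + Real.sqrt β), ((Adfun α β x) ^ 2 - 4 * x ^ 2) =
      (∫ x in (α - Real.sqrt β)..α, ((Adfun α β x) ^ 2 - 4 * x ^ 2)) +
      ∫ x in α..(α + Real.sqrt β), ((Adfun α β x) ^ 2 - 4 * x ^ 2) :=
    (intervalIntegral.integral_add_adjacent_intervals hint.intervalIntegrable
      hint.intervalIntegrable).symm
  have h3 : ∫ x in (α - Real.sqrt β)..α, ((Adfun α β x) ^ 2 - 4 * x ^ 2) =
      ∫ x in (α - Real.sqrt β)..α, (4 * (α - Real.sqrt β) ^ 2 - 4 * x ^ 2) := by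
    apply intervalIntegral.integral_congr_ae
    filter_upwards [ae_ne_real α] with x hxne hxI
    rw [Set.uIoc_of_le haα] at hxI
    obtain ⟨hx1, hx2⟩ := hxI
    have hx2' : x < α := lt_of_le_of_ne hx2 hxne
    simp only [Adfun]
    rw [if_neg (not_lt.mpr hx1.le), if_pos hx2']
    ring
  have h4 : ∫ x in α..(α + Real.sqrt β), ((Adfun α β x) ^ 2 - 4 * x ^ 2) =
      ∫ x in α..(α + Real.sqrt β), (4 * (α + Real.sqrt β) ^ 2 - 4 * x ^ 2) := by
    apply intervalIntegral.integral_congr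
    intro x hx
    rw [Set.uIcc_of_le hαb] at hx
    obtain ⟨hx1, hx2⟩ := hx
    simp only [Adfun]
    rw [if_neg (not_lt.mpr (by linarith)), if_neg (not_lt.mpr hx1)]
    rcases lt_or_ge x (α + Real.sqrt β) with h | h
    · rw [if_pos h]; ring
    · have hxb : x = α + Real.sqrt β := le_antisymm hx2 h
      rw [if_neg (not_lt.mpr h), hxb]
      ring
  have h32 : β ^ ((3 : ℝ) / 2) = Real.sqrt β ^ 3 := by
    rw [show ((3:ℝ)/2) = (1/2) * 3 by norm_num, Real.rpow_mul hβ.le, ← Real.sqrt_eq_rpow,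
      show (3:ℝ) = ((3:ℕ):ℝ) by norm_num, Real.rpow_natCast]
  rw [h1, h2, h3, h4, poly_integral, poly_integral, h32]
  ring


/-- The energy of `A_{α,β}(1,·)` is `(4/3)β^{3/2}`, independently of `α`. -/
theorem Afun_energy (α β : ℝ) (hβ : 0 < β) :
    ∃ Ad : ℝ → ℝ,
      (∀ p q : ℝ, Afun α β q - Afun α β p = ∫ r in p..q, Ad r) ∧
      Integrable (fun x : ℝ => (Ad x) ^ 2 - 4 * x ^ 2) ∧
      (1 / 4) * ∫ x : ℝ, ((Ad x) ^ 2 - 4 * x ^ 2) = (4 / 3) * β ^ ((3 : ℝ) / 2) := by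
  refine ⟨Adfun α β, fun p q => ?_, g_integrable α β hβ, g_integral α β hβ⟩
  have key : ∀ u v : ℝ, u ≤ v →
      ∫ r in u..v, Adfun α β r = Afun α β v - Afun α β u := fun u v huv =>
    intervalIntegral.integral_eq_sub_of_hasDeriv_right_of_le huv
      ((Afun_continuous α β hβ).continuousOn)
      (fun x _ => Afun_hasDerivWithinAt α β hβ x)
      (Adfun_intervalIntegrable α β u v)
  rcases le_total p q with h | h
  · exact (key p q h).symm
  · rw [intervalIntegral.integral_symm, key q p h]
    ring
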